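/- Let α = 5 and let G be the graph obtained from the complete graph K_5 by subdividing once every edge of a fixed Hamilton cycle, with all edges of weight 1, and let C be the resulting cycle of length 10. Then for every pair of distinct nodes u ≠ v of G and every edge e ∈ C, there exists a u-v path of weight at most 5·d_G(u,v) that contains e. -/

import Mathlib

/-!
If `u` and `v` are not adjacent then `d_G(u, v) ≥ 2`, so the bound `5 · d_G(u, v) ≥ 10` exceeds the
length of every path in the 10-vertex graph `G`, and one of the two arcs of the Hamilton cycle `C`
from `u` to `v` passes through `e`. If `u` and `v` are adjacent the bound is `5`. Rotating by an
original vertex (`i ↦ i + c`, `c` even) is an automorphism of `G` preserving `C`, and up to such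
rotations and orientation every edge of `G` is `01`, `12` or `04`; for these three, paths of
length at most `5` through each edge of `C` are listed explicitly.
-/

/-- The original (degree-4) vertices of the subdivided `K₅`. -/
def origV : Set (ZMod 10) := {0, 2, 4, 6, 8}

/-- `K₅` with every edge of a fixed Hamilton cycle subdivided once: the original vertices are
the even elements of `ZMod 10`, the cycle is `i — i+1`, and the chords join original vertices
that are not consecutive on the Hamilton cycle. -/
def subK5 : SimpleGraph (ZMod 10) :=
  SimpleGraph.fromRel (fun i j =>
    j = i + 1 ∨ (i ∈ origV ∧ j ∈ origV ∧ j ≠ i + 2 ∧ i ≠ j + 2))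

/-- The edges of the 10-cycle `C`. -/
def Cedges : Set (Sym2 (ZMod 10)) := {e | ∃ i : ZMod 10, e = s(i, i + 1)}

namespace SimpleGraph

variable {V : Type*} {G : SimpleGraph V}

def HasPathThrough (G : SimpleGraph V) (u v : V) (e : Sym2 V) (n : ℕ) : Prop :=
  ∃ p : G.Walk u v, p.IsPath ∧ e ∈ p.edges ∧ p.length ≤ n

namespace HasPathThrough

variable {u v : V} {e : Sym2 V} {n : ℕ}

theorem mono {m : ℕ} (h : G.HasPathThrough u v e n) (hnm : n ≤ m) :
    G.HasPathThrough u v e m :=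
  let ⟨p, hp, he, hn⟩ := h
  ⟨p, hp, he, hn.trans hnm⟩

theorem symm (h : G.HasPathThrough u v e n) : G.HasPathThrough v u e n :=
  let ⟨p, hp, he, hn⟩ := h
  ⟨p.reverse, hp.reverse, by rwa [Walk.edges_reverse, List.mem_reverse],
    by rwa [Walk.length_reverse]⟩

theorem map {W : Type*} {G' : SimpleGraph W} (f : G ↪g G') (h : G.HasPathThrough u v e n) :
    G'.HasPathThrough (f u) (f v) (e.map f) n :=
  let ⟨p, hp, he, hn⟩ := h
  ⟨p.map f.toHom, hp.map f.injective, by rw [Walk.edges_map]; exact List.mem_map_of_mem he,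
    by rwa [Walk.length_map]⟩

end HasPathThrough

theorem hasPathThrough_of_isChain {u v a b : V} {l : List V}
    (hu : l.head? = some u) (hv : l.getLast? = some v) (hchain : l.IsChain G.Adj)
    (hnodup : l.Nodup) (hab : [a, b] <:+: l ∨ [b, a] <:+: l) :
    G.HasPathThrough u v s(a, b) (l.length - 1) := by
  rcases l with _ | ⟨w, l⟩
  · simp at hu
  obtain rfl : w = u := by simpa using hu
  have hlast : (w :: l).getLast (List.cons_ne_nil w l) = v := by
    rwa [List.getLast?_eq_some_getLast (List.cons_ne_nil w l), Option.some_inj] at hv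
  set p : G.Walk w v :=
    (Walk.ofSupport (w :: l) (List.cons_ne_nil w l) hchain).copy (List.head_cons ..) hlast with hp
  have hsupp : p.support = w :: l := by rw [hp, Walk.support_copy, Walk.support_ofSupport]
  refine ⟨p, ?_, ?_, ?_⟩
  · rw [Walk.isPath_def, hsupp]; exact hnodup
  · rw [← Walk.infix_support_iff_mem_edges, hsupp]; exact hab
  · rw [hp, Walk.length_copy, Walk.length_ofSupport]

section CycleArc

variable {n : ℕ} {G : SimpleGraph (ZMod n)} (hG : ∀ i, G.Adj i (i + 1))

def cycleArc : (u : ZMod n) → (k : ℕ) → G.Walk u (u + k)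
  | u, 0 => Walk.nil.copy rfl (by simp)
  | u, k + 1 => .cons (hG u) ((cycleArc (u + 1) k).copy rfl (by push_cast; ring))

theorem length_cycleArc (u : ZMod n) (k : ℕ) : (cycleArc hG u k).length = k := by
  induction k generalizing u with
  | zero => simp [cycleArc]
  | succ k ih => simp [cycleArc, ih]

theorem support_cycleArc (u : ZMod n) (k : ℕ) :
    (cycleArc hG u k).support = (List.range (k + 1)).map (fun j : ℕ => u + j) := by
  induction k generalizing u with
  | zero => simp [cycleArc]
  | succ k ih =>
    rw [List.range_succ_eq_map]
    simp [cycleArc, ih, add_assoc, add_comm (1 : ZMod n)]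

theorem mem_edges_cycleArc {u : ZMod n} {j k : ℕ} (hjk : j < k) :
    s(u + j, u + j + 1) ∈ (cycleArc hG u k).edges := by
  induction k generalizing u j with
  | zero => omega
  | succ k ih =>
    rcases j with _ | j
    · simp [cycleArc]
    · have := ih (u := u + 1) (j := j) (by omega)
      simp only [cycleArc, Walk.edges_cons, Walk.edges_copy, List.mem_cons]
      right
      convert this using 2 <;> push_cast <;> ring

theorem isPath_cycleArc [NeZero n] (u : ZMod n) {k : ℕ} (hk : k < n) :
    (cycleArc hG u k).IsPath := by
  rw [Walk.isPath_def, support_cycleArc]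
  refine List.nodup_range.map_on fun a ha b hb hab => ?_
  rw [List.mem_range] at ha hb
  have := congrArg ZMod.val (add_left_cancel hab)
  rwa [ZMod.val_natCast_of_lt (by omega), ZMod.val_natCast_of_lt (by omega)] at this

end CycleArc

theorem hasPathThrough_of_adj_add_one {n : ℕ} [NeZero n] {G : SimpleGraph (ZMod n)}
    (hG : ∀ i, G.Adj i (i + 1)) {u v : ZMod n} (huv : u ≠ v) (i : ZMod n) :
    G.HasPathThrough u v s(i, i + 1) (n - 1) := by
  have arc (w : ZMod n) (j k : ℕ) (hjk : j < k) (hk : k < n) :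
      G.HasPathThrough w (w + k) s(w + j, w + j + 1) (n - 1) :=
    ⟨cycleArc hG w k, isPath_cycleArc hG w hk, mem_edges_cycleArc hG hjk,
      by rw [length_cycleArc]; omega⟩
  have hvu : 0 < (v - u).val := ZMod.val_pos.mpr (sub_ne_zero.mpr huv.symm)
  by_cases h : (i - u).val < (v - u).val
  · simpa using arc u _ _ h (ZMod.val_lt _)
  · have hiv : (i - v).val = (i - u).val - (v - u).val := by
      rw [← ZMod.val_sub (by omega), sub_sub_sub_cancel_right]
    have huv' : (u - v).val = n - (v - u).val := by
      rw [← neg_sub, ZMod.neg_val, if_neg (sub_ne_zero.mpr huv.symm)]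
    have hlt : (i - v).val < (u - v).val := by
      have := ZMod.val_lt (i - u)
      omega
    simpa using (arc v _ _ hlt (ZMod.val_lt _)).symm

end SimpleGraph

open SimpleGraph

instance : DecidablePred (· ∈ origV) := fun i =>
  decidable_of_iff (i = 0 ∨ i = 2 ∨ i = 4 ∨ i = 6 ∨ i = 8) (by simp [origV])

instance : DecidableRel subK5.Adj := fun a b =>
  decidable_of_iff _ (fromRel_adj _ a b).symm

namespace subK5

theorem adj_add_one (i : ZMod 10) : subK5.Adj i (i + 1) := by
  revert i; decide

theorem adj_add_iff {c : ZMod 10} (hc : c ∈ origV) {i j : ZMod 10} :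
    subK5.Adj (i + c) (j + c) ↔ subK5.Adj i j := by
  revert c i j; decide

def rotate {c : ZMod 10} (hc : c ∈ origV) : subK5 ≃g subK5 :=
  ⟨Equiv.addRight c, adj_add_iff hc⟩

/-- Every edge of `subK5` is a rotation of one of these, in one of its two orientations. -/
def edgeReps : List (ZMod 10 × ZMod 10) := [(0, 1), (1, 2), (0, 4)]

theorem exists_rotate_mem_edgeReps_of_adj :
    ∀ u v : ZMod 10, subK5.Adj u v → ∃ c ∈ origV, ∃ p ∈ edgeReps,
      (u = p.1 + c ∧ v = p.2 + c) ∨ (v = p.1 + c ∧ u = p.2 + c) := by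
  decide

theorem hasPathThrough_of_mem_edgeReps :
    ∀ p ∈ edgeReps, ∀ i : ZMod 10, subK5.HasPathThrough p.1 p.2 s(i, i + 1) 5 := by
  have witness : ∀ p ∈ edgeReps, ∀ i : ZMod 10,
      ∃ l ∈ ([[0, 1], [0, 4, 3, 2, 1], [0, 4, 5, 6, 2, 1], [0, 6, 7, 8, 2, 1], [0, 9, 8, 2, 1],
        [1, 2], [1, 0, 4, 3, 2], [1, 0, 4, 5, 6, 2], [1, 0, 6, 7, 8, 2], [1, 0, 9, 8, 2],
        [0, 1, 2, 3, 4], [0, 9, 8, 4], [0, 6, 5, 4], [0, 6, 7, 8, 4]] : List (List (ZMod 10))),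
        l.head? = some p.1 ∧ l.getLast? = some p.2 ∧ l.IsChain subK5.Adj ∧ l.Nodup ∧
          ([i, i + 1] <:+: l ∨ [i + 1, i] <:+: l) ∧ l.length ≤ 6 := by
    decide
  intro p hp i
  obtain ⟨l, -, hu, hv, hchain, hnodup, hi, hlen⟩ := witness p hp i
  exact (hasPathThrough_of_isChain hu hv hchain hnodup hi).mono (by omega)

theorem hasPathThrough_of_adj {u v : ZMod 10} (huv : subK5.Adj u v) (i : ZMod 10) :
    subK5.HasPathThrough u v s(i, i + 1) 5 := by
  have rotated {c : ZMod 10} (hc : c ∈ origV) (p) (hp : p ∈ edgeReps) :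
      subK5.HasPathThrough (p.1 + c) (p.2 + c) s(i, i + 1) 5 := by
    simpa [rotate, add_right_comm _ (1 : ZMod 10)] using
      (hasPathThrough_of_mem_edgeReps p hp (i - c)).map (rotate hc).toEmbedding
  obtain ⟨c, hc, p, hp, ⟨rfl, rfl⟩ | ⟨rfl, rfl⟩⟩ := exists_rotate_mem_edgeReps_of_adj u v huv
  · exact rotated hc p hp
  · exact (rotated hc p hp).symm

end subK5

/-- In the subdivided `K₅` with `α = 5`, for every pair of distinct nodes `u ≠ v` and every
edge `e` of the cycle `C`, some `u`-`v` path of (hop-)length at most `5·d_G(u,v)` contains `e`. -/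
theorem subK5_every_cycle_edge_on_feasible_path :
    ∀ u v : ZMod 10, u ≠ v → ∀ e ∈ Cedges,
      ∃ p : subK5.Walk u v, p.IsPath ∧ e ∈ p.edges ∧ p.length ≤ 5 * subK5.dist u v := by
  rintro u v huv _ ⟨i, rfl⟩
  by_cases hadj : subK5.Adj u v
  · refine (subK5.hasPathThrough_of_adj hadj i).mono ?_
    rw [dist_eq_one_iff_adj.mpr hadj]
  · have hcycle := hasPathThrough_of_adj_add_one subK5.adj_add_one huv i
    have hdist : 1 < subK5.dist u v :=
      let ⟨p, _⟩ := hcycle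
      p.reachable.one_lt_dist_of_ne_of_not_adj huv hadj
    exact hcycle.mono (by omega)
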